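/- arXiv:2011.05359 — 3 statements merged into one kernel-verified Lean document; each statement's English description precedes it below -/
import Mathlib

section
/- Suppose $1/n\ll\varepsilon$ and $d\geq n^{-\varepsilon}$. Let $G$ be an $(\varepsilon,d)$-super-regular bipartite graph with parts $A,B$, $|A|=|B|=n$, such that for all but at most $n^{3/2}$ pairs $\{a,a'\}\in\binom{A}{2}$ we have $|N_G(a)\cap N_G(a')|\leq(1+\varepsilon)d^2n$. Then for every $X\subseteq A$ and $Y\subseteq B$ with $n^{3/4+3\varepsilon}\leq|X|,|Y|\leq\varepsilon n$, we have $e_G(X,Y)\leq\varepsilon^{1/3}dn\max\{|X|,|Y|\}$. -/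
/-!
Double count cherries: pairs `{x, x'} ⊆ X` with a common neighbour in `Y`. Cauchy–Schwarz on
the degrees into `X` of the vertices of `Y` gives `e(X,Y)² ≤ |Y| (2 · #cherries + e(X,Y))`.
A pair of typical codegree lies in at most `(1 + ε) d² n` cherries, and each of the at most
`n^{3/2}` atypical pairs in at most `2 d n`. If `e(X,Y) > ε^{1/3} d n max(|X|, |Y|)`, the typical
pairs supply at most a fraction `(1 + ε) ε^{1/3} < 1/2` of the cherries Cauchy–Schwarz then
demands (as `|X| ≤ ε n`), and the atypical ones a vanishing fraction (as
`|X| ≥ n^{3/4 + 3ε}`).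
-/

open Finset
open scoped Classical

variable {V : Type*} [Fintype V] [DecidableEq V]

noncomputable def eBetween (G : SimpleGraph V) (X Y : Finset V) : ℕ :=
  ∑ x ∈ X, (Y.filter fun y => G.Adj x y).card

noncomputable def nbhd (G : SimpleGraph V) (a : V) : Finset V :=
  Finset.univ.filter fun b => G.Adj a b

def EpsRegular (G : SimpleGraph V) (A B : Finset V) (ε d : ℝ) : Prop :=
  ∀ W₁ ⊆ A, ∀ W₂ ⊆ B, ε * A.card ≤ W₁.card → ε * B.card ≤ W₂.card →
    (1 - ε) * d ≤ (eBetween G W₁ W₂ : ℝ) / (W₁.card * W₂.card) ∧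
      (eBetween G W₁ W₂ : ℝ) / (W₁.card * W₂.card) ≤ (1 + ε) * d

def SuperRegular (G : SimpleGraph V) (A B : Finset V) (ε d : ℝ) : Prop :=
  EpsRegular G A B ε d ∧
    (∀ a ∈ A, (1 - ε) * d * B.card ≤ ((nbhd G a ∩ B).card : ℝ) ∧
      ((nbhd G a ∩ B).card : ℝ) ≤ (1 + ε) * d * B.card) ∧
    (∀ b ∈ B, (1 - ε) * d * A.card ≤ ((nbhd G b ∩ A).card : ℝ) ∧
      ((nbhd G b ∩ A).card : ℝ) ≤ (1 + ε) * d * A.card)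

noncomputable def commonNbhdIn {α : Type*} (G : SimpleGraph α) (Y p : Finset α) : Finset α :=
  {y ∈ Y | ∀ a ∈ p, G.Adj a y}

noncomputable def cherryCount {α : Type*} (G : SimpleGraph α) (X Y : Finset α) : ℕ :=
  ∑ p ∈ X.powersetCard 2, #(commonNbhdIn G Y p)

lemma Finset.filter_powersetCard_forall {α : Type*} (s : Finset α) (q : α → Prop)
    [DecidablePred q] (k : ℕ) :
    {t ∈ s.powersetCard k | ∀ a ∈ t, q a} = {a ∈ s | q a}.powersetCard k := by
  ext t
  simp only [mem_filter, mem_powersetCard, subset_iff]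
  grind

section Counting

variable {α : Type*} (G : SimpleGraph α) (X Y : Finset α)

lemma eBetween_eq_sum_card_filter_adj :
    eBetween G X Y = ∑ y ∈ Y, #{x ∈ X | G.Adj x y} :=
  sum_card_bipartiteAbove_eq_sum_card_bipartiteBelow G.Adj

lemma cherryCount_eq_sum_choose_two :
    cherryCount G X Y = ∑ y ∈ Y, (#{x ∈ X | G.Adj x y}).choose 2 :=
  calc cherryCount G X Y = ∑ y ∈ Y, #{p ∈ X.powersetCard 2 | ∀ a ∈ p, G.Adj a y} :=
        sum_card_bipartiteAbove_eq_sum_card_bipartiteBelow fun p y => ∀ a ∈ p, G.Adj a y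
    _ = _ := by simp_rw [filter_powersetCard_forall, card_powersetCard]

lemma sq_eBetween_le :
    (eBetween G X Y : ℝ) ^ 2 ≤ #Y * (2 * cherryCount G X Y + eBetween G X Y) := by
  have hsq : ∀ k : ℕ, (k : ℝ) ^ 2 = 2 * (k.choose 2 : ℕ) + k := fun k => by
    rw [Nat.cast_choose_two]; ring
  rw [cherryCount_eq_sum_choose_two, eBetween_eq_sum_card_filter_adj]
  push_cast
  rw [mul_sum, ← sum_add_distrib]
  simp_rw [← hsq]
  exact sq_sum_le_card_mul_sum_sq

end Counting

section Codegrees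

variable {α : Type*} [Fintype α] [DecidableEq α] (G : SimpleGraph α) {A X Y : Finset α}

lemma card_commonNbhdIn_le_card_inter {p : Finset α} {a b : α} (ha : a ∈ p) (hb : b ∈ p) :
    #(commonNbhdIn G Y p) ≤ #(nbhd G a ∩ nbhd G b) :=
  card_le_card fun y hy => by simp_all [nbhd, commonNbhdIn]

lemma card_commonNbhdIn_le_card_nbhd_inter {p : Finset α} {a : α} (ha : a ∈ p) :
    #(commonNbhdIn G Y p) ≤ #(nbhd G a ∩ Y) :=
  card_le_card fun y hy => by simp_all [nbhd, commonNbhdIn]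

lemma SuperRegular.card_nbhd_inter_le {B : Finset α} {ε d : ℝ}
    (hSR : SuperRegular G A B ε d) (hε : ε ≤ 1) (hd : 0 ≤ d) (hYB : Y ⊆ B) {a : α}
    (ha : a ∈ A) :
    (#(nbhd G a ∩ Y) : ℝ) ≤ 2 * d * #B :=
  calc (#(nbhd G a ∩ Y) : ℝ) ≤ #(nbhd G a ∩ B) := by
        exact_mod_cast card_le_card (inter_subset_inter subset_rfl hYB)
    _ ≤ (1 + ε) * d * #B := (hSR.2.1 a ha).2
    _ ≤ 2 * d * #B := by gcongr; linarith

lemma cherryCount_le (hXA : X ⊆ A) {c Δ : ℝ} (hc : 0 ≤ c) (hΔ : 0 ≤ Δ)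
    (hdeg : ∀ a ∈ X, (#(nbhd G a ∩ Y) : ℝ) ≤ Δ) :
    (cherryCount G X Y : ℝ) ≤ #X ^ 2 / 2 * c +
      #{p ∈ A.powersetCard 2 | ¬ ∀ a ∈ p, ∀ a' ∈ p, a ≠ a' →
        (#(nbhd G a ∩ nbhd G a') : ℝ) ≤ c} * Δ := by
  set bad := {p ∈ A.powersetCard 2 | ¬ ∀ a ∈ p, ∀ a' ∈ p, a ≠ a' →
    (#(nbhd G a ∩ nbhd G a') : ℝ) ≤ c}
  set f : Finset α → ℝ := fun p => #(commonNbhdIn G Y p)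
  have hgood : ∀ p ∈ {p ∈ X.powersetCard 2 | p ∉ bad}, f p ≤ c := by
    intro p hp
    obtain ⟨⟨hpX, hp2⟩, hpbad⟩ := by simpa only [mem_filter, mem_powersetCard] using hp
    obtain ⟨a, b, hab, rfl⟩ := card_eq_two.mp hp2
    have hcodeg : (#(nbhd G a ∩ nbhd G b) : ℝ) ≤ c := by
      simp only [bad, mem_filter, mem_powersetCard, not_and, not_not] at hpbad
      exact hpbad ⟨hpX.trans hXA, hp2⟩ a (by simp) b (by simp) hab
    exact (Nat.cast_le.mpr (card_commonNbhdIn_le_card_inter G (by simp) (by simp))).trans hcodeg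
  have hbad_pair : ∀ p ∈ {p ∈ X.powersetCard 2 | p ∈ bad}, f p ≤ Δ := by
    intro p hp
    obtain ⟨hpX, hp2⟩ := mem_powersetCard.mp (mem_filter.mp hp).1
    obtain ⟨a, b, -, rfl⟩ := card_eq_two.mp hp2
    exact (Nat.cast_le.mpr (card_commonNbhdIn_le_card_nbhd_inter G (by simp))).trans
      (hdeg a (hpX (by simp)))
  have hcard_good : (#{p ∈ X.powersetCard 2 | p ∉ bad} : ℝ) ≤ #X ^ 2 / 2 := by
    calc (#{p ∈ X.powersetCard 2 | p ∉ bad} : ℝ) ≤ #X * (#X - 1) / 2 := by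
          rw [← Nat.cast_choose_two, ← card_powersetCard]
          exact_mod_cast card_filter_le _ _
      _ ≤ #X ^ 2 / 2 := by nlinarith [(#X).cast_nonneg (α := ℝ)]
  have hcard_bad : #{p ∈ X.powersetCard 2 | p ∈ bad} ≤ #bad :=
    card_le_card fun p hp => (mem_filter.mp hp).2
  calc (cherryCount G X Y : ℝ)
      = ∑ p ∈ X.powersetCard 2 with p ∉ bad, f p +
          ∑ p ∈ X.powersetCard 2 with p ∈ bad, f p := by
        rw [add_comm, sum_filter_add_sum_filter_not]
        simp only [cherryCount, f, Nat.cast_sum]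
    _ ≤ #{p ∈ X.powersetCard 2 | p ∉ bad} * c +
          #{p ∈ X.powersetCard 2 | p ∈ bad} * Δ := by
        gcongr
        · exact sum_le_card_nsmul _ _ _ hgood |>.trans_eq (nsmul_eq_mul _ _)
        · exact sum_le_card_nsmul _ _ _ hbad_pair |>.trans_eq (nsmul_eq_mul _ _)
    _ ≤ #X ^ 2 / 2 * c + #bad * Δ := by gcongr

end Codegrees

section Arithmetic

lemma le_mul_of_sq_le_mul_add {e y Q K M : ℝ} (hK : 100 ≤ K) (hy : 0 ≤ y) (hyM : y ≤ M)
    (hcs : e ^ 2 ≤ y * (Q + e)) (hQ : Q * y ≤ 98 / 100 * (K * M) ^ 2) : e ≤ K * M := by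
  by_contra! h
  have hKM : 100 * y ≤ K * M := by nlinarith
  -- `e > K M ≥ 100 y`, so the term `y e` is at most `e ^ 2 / 100`.
  nlinarith

lemma mul_one_add_pow_three_le {u : ℝ} (hu0 : 0 ≤ u) (hu : u ^ 3 ≤ 1 / 12) :
    u * (1 + u ^ 3) ≤ 48 / 100 := by
  have : u ≤ 44 / 100 := by
    by_contra! h
    nlinarith [pow_le_pow_left₀ (by norm_num) h.le 3]
  nlinarith

variable {u t d x : ℝ}

lemma two_mul_le_of_cherryCount_le {P : ℝ} (hu0 : 0 < u) (hu : u ^ 3 ≤ 1 / 12)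
    (ht : 100 ≤ u ^ 3 * t) (hd : 0 ≤ d) (hdx : t ^ 3 ≤ d * x) (hx0 : 0 ≤ x)
    (hx : x ≤ u ^ 3 * t ^ 4)
    (hP : P ≤ x ^ 2 / 2 * ((1 + u ^ 3) * d ^ 2 * t ^ 4) + t ^ 6 * (2 * d * t ^ 4)) :
    2 * P ≤ 98 / 100 * (u * d * t ^ 4) ^ 2 * x := by
  have hu1 : u ≤ 1 := (pow_le_one_iff_of_nonneg hu0.le three_ne_zero).mp (by linarith)
  have hgood : x ^ 2 * (1 + u ^ 3) ≤ 48 / 100 * (u ^ 2 * t ^ 4 * x) := by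
    have := mul_one_add_pow_three_le hu0.le hu
    calc x ^ 2 * (1 + u ^ 3) ≤ x * (u ^ 3 * t ^ 4) * (1 + u ^ 3) := by gcongr; nlinarith
      _ = u * (1 + u ^ 3) * (u ^ 2 * t ^ 4 * x) := by ring
      _ ≤ _ := mul_le_mul_of_nonneg_right this (by positivity)
  have hbad : 8 * t ^ 2 ≤ u ^ 2 * (d * x) := by
    have : 8 ≤ u ^ 2 * t := by nlinarith
    nlinarith
  nlinarith [mul_le_mul_of_nonneg_left hgood (by positivity : 0 ≤ d ^ 2 * t ^ 4),
    mul_le_mul_of_nonneg_left hbad (by positivity : 0 ≤ d * t ^ 8)]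

lemma le_mul_max_of_cherryCount_le {y e P : ℝ} (hu0 : 0 < u) (hu : u ^ 3 ≤ 1 / 12)
    (ht : 100 ≤ u ^ 3 * t) (hd : 0 ≤ d) (hdx : t ^ 3 ≤ d * x) (hx0 : 0 ≤ x)
    (hx : x ≤ u ^ 3 * t ^ 4) (hy : 0 ≤ y) (hcs : e ^ 2 ≤ y * (2 * P + e))
    (hP : P ≤ x ^ 2 / 2 * ((1 + u ^ 3) * d ^ 2 * t ^ 4) + t ^ 6 * (2 * d * t ^ 4)) :
    e ≤ u * d * t ^ 4 * max x y := by
  have hu1 : u ≤ 1 := (pow_le_one_iff_of_nonneg hu0.le three_ne_zero).mp (by linarith)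
  have hu3 : u ^ 3 ≤ 1 := by linarith
  have ht0 : 0 < t := pos_of_mul_pos_right (a := u ^ 3) (by linarith) (by positivity)
  have ht1 : 1 ≤ t := by nlinarith [mul_nonneg (sub_nonneg.2 hu3) ht0.le]
  have hK : 100 ≤ u * d * t ^ 4 := by
    have hdt : t ^ 3 ≤ d * t ^ 4 :=
      hdx.trans (by gcongr; nlinarith [mul_nonneg (sub_nonneg.2 hu3) (pow_nonneg ht0.le 4)])
    have hut : u ^ 3 * t ≤ u * t ^ 3 := by
      gcongr
      · exact pow_le_of_le_one hu0.le hu1 three_ne_zero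
      · exact le_self_pow₀ ht1 three_ne_zero
    nlinarith
  have hxy : x * y ≤ max x y ^ 2 := by
    rw [sq]
    exact mul_le_mul (le_max_left x y) (le_max_right x y) hy (hx0.trans (le_max_left x y))
  refine le_mul_of_sq_le_mul_add hK hy (le_max_right x y) hcs ?_
  calc 2 * P * y ≤ 98 / 100 * (u * d * t ^ 4) ^ 2 * x * y :=
        mul_le_mul_of_nonneg_right (two_mul_le_of_cherryCount_le hu0 hu ht hd hdx hx0 hx hP) hy
    _ = 98 / 100 * (u * d * t ^ 4) ^ 2 * (x * y) := by ring
    _ ≤ 98 / 100 * (u * d * t ^ 4) ^ 2 * max x y ^ 2 := by gcongr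
    _ = 98 / 100 * (u * d * t ^ 4 * max x y) ^ 2 := by ring

end Arithmetic

section Exponents

lemma rpow_div_four_eq_pow {n : ℝ} (hn : 0 ≤ n) (k : ℕ) :
    n ^ ((k : ℝ) / 4) = (n ^ ((1 : ℝ) / 4)) ^ k := by
  rw [← Real.rpow_natCast, ← Real.rpow_mul hn]
  ring_nf

variable {n ε x : ℝ}

lemma le_one_div_twelve_of_rpow_le (hn : 1 < n) (hε : ε ≤ 1)
    (hx : n ^ ((3 : ℝ) / 4 + 3 * ε) ≤ x) (hxn : x ≤ ε * n) : ε ≤ 1 / 12 := by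
  have : n ^ ((3 : ℝ) / 4 + 3 * ε) ≤ n ^ (1 : ℝ) := by
    rw [Real.rpow_one]
    nlinarith
  linarith [(Real.rpow_le_rpow_left_iff hn).mp this]

lemma rpow_three_div_four_le_mul {d : ℝ} (hn : 1 ≤ n) (hε : 0 ≤ ε) (hd : n ^ (-ε) ≤ d)
    (hx : n ^ ((3 : ℝ) / 4 + 3 * ε) ≤ x) : n ^ ((3 : ℝ) / 4) ≤ d * x :=
  calc n ^ ((3 : ℝ) / 4) ≤ n ^ (-ε + ((3 : ℝ) / 4 + 3 * ε)) :=
        Real.rpow_le_rpow_of_exponent_le hn (by linarith)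
    _ = n ^ (-ε) * n ^ ((3 : ℝ) / 4 + 3 * ε) := Real.rpow_add (by linarith) _ _
    _ ≤ d * x := mul_le_mul hd hx (by positivity) ((Real.rpow_nonneg (by linarith) _).trans hd)

lemma le_mul_rpow_one_div_four_of_ceil_le {c : ℝ} {N : ℕ} (hε : 0 < ε) (hc : 0 ≤ c)
    (hN : ⌈(c / ε) ^ 4⌉₊ ≤ N) : c ≤ ε * (N : ℝ) ^ ((1 : ℝ) / 4) := by
  rw [← div_le_iff₀' hε]
  refine (pow_le_pow_iff_left₀ (by positivity) (by positivity) four_ne_zero).mp ?_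
  rw [← rpow_div_four_eq_pow N.cast_nonneg]
  norm_num
  exact Nat.ceil_le.mp hN

end Exponents

/-- Lemma 3.5 of the paper: in a sparse super-regular pair with almost all codegrees of the
appropriate size, small vertex subsets span few edges. -/
theorem edges_in_sparse_graphs :
    ∀ ε : ℝ, 0 < ε → ε ≤ 1 → ∃ n₀ : ℕ, ∀ n : ℕ, n₀ ≤ n →
    ∀ (W : Type) [Fintype W] [DecidableEq W],
    ∀ (G : SimpleGraph W) (A B : Finset W) (d : ℝ),
      (n : ℝ) ^ (-ε) ≤ d → d ≤ 1 →
      Disjoint A B → A.card = n → B.card = n →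
      (∀ u v, G.Adj u v → (u ∈ A ∧ v ∈ B) ∨ (u ∈ B ∧ v ∈ A)) →
      SuperRegular G A B ε d →
      (((((A.powersetCard 2).filter fun p =>
          ¬ ∀ a ∈ p, ∀ a' ∈ p, a ≠ a' →
            (((nbhd G a ∩ nbhd G a').card : ℝ) ≤ (1 + ε) * d ^ 2 * n))).card : ℝ)
        ≤ (n : ℝ) ^ ((3 : ℝ) / 2)) →
      ∀ X ⊆ A, ∀ Y ⊆ B,
        (n : ℝ) ^ ((3 : ℝ) / 4 + 3 * ε) ≤ (X.card : ℝ) → (X.card : ℝ) ≤ ε * n →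
        (n : ℝ) ^ ((3 : ℝ) / 4 + 3 * ε) ≤ (Y.card : ℝ) → (Y.card : ℝ) ≤ ε * n →
        (eBetween G X Y : ℝ) ≤ ε ^ ((1 : ℝ) / 3) * d * n * max (X.card : ℝ) (Y.card : ℝ) := by
  intro ε hε hε1
  refine ⟨⌈(100 / ε) ^ 4⌉₊, fun n hn W _ _ G A B d hdlow _ _ _ hB _ hSR hcodeg X hXA Y hYB
    hX1 hX2 _ _ => ?_⟩
  -- Writing `n = t ^ 4` and `ε = u ^ 3` turns every estimate into a polynomial one.
  set t := (n : ℝ) ^ ((1 : ℝ) / 4)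
  set u := ε ^ ((1 : ℝ) / 3)
  have hn4 : (n : ℝ) = t ^ 4 := by rw [← rpow_div_four_eq_pow n.cast_nonneg]; norm_num
  have hs : (n : ℝ) ^ ((3 : ℝ) / 2) = t ^ 6 := by
    rw [← rpow_div_four_eq_pow n.cast_nonneg]; norm_num
  have hu3 : u ^ 3 = ε := by rw [← Real.rpow_natCast, ← Real.rpow_mul hε.le]; norm_num
  have ht : 100 ≤ ε * t := le_mul_rpow_one_div_four_of_ceil_le hε (by norm_num) hn
  have hn1 : 1 < (n : ℝ) := by
    have : 1 < t := by nlinarith [mul_le_mul_of_nonneg_right hε1 (by positivity : 0 ≤ t)]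
    rw [hn4]
    exact one_lt_pow₀ this four_ne_zero
  have hd : 0 ≤ d := (Real.rpow_nonneg n.cast_nonneg _).trans hdlow
  have hdx : t ^ 3 ≤ d * #X := by
    rw [← rpow_div_four_eq_pow n.cast_nonneg]
    exact_mod_cast rpow_three_div_four_le_mul hn1.le hε.le hdlow hX1
  have hdeg : ∀ a ∈ X, (#(nbhd G a ∩ Y) : ℝ) ≤ 2 * d * n := fun a ha =>
    hB ▸ hSR.card_nbhd_inter_le G hε1 hd hYB (hXA ha)
  have hP : (cherryCount G X Y : ℝ) ≤
      #X ^ 2 / 2 * ((1 + u ^ 3) * d ^ 2 * t ^ 4) + t ^ 6 * (2 * d * t ^ 4) := by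
    rw [hu3, ← hn4, ← hs]
    refine (cherryCount_le G hXA (c := (1 + ε) * d ^ 2 * n) (by positivity) (by positivity)
      hdeg).trans ?_
    exact add_le_add le_rfl (mul_le_mul_of_nonneg_right hcodeg (by positivity))
  rw [hn4]
  exact le_mul_max_of_cherryCount_le (by positivity)
    (by rw [hu3]; exact le_one_div_twelve_of_rpow_le hn1 hε1 hX1 hX2) (by rwa [hu3]) hd hdx
    (Nat.cast_nonneg _) (by rwa [hu3, ← hn4]) (Nat.cast_nonneg _) (sq_eBetween_le G X Y) hP
end

section
/- Suppose $X,X_1,\ldots,X_m$ are real-valued random variables with $X=\sum_{i=1}^m X_i$, $|X_i|\leq B$ for all $i$, and $\sum_{i=1}^m\mathbb{E}_i[|X_i|]\leq\mu$, where $\mathbb{E}_i[\cdot]$ denotes conditional expectation given the values of $X_j$ for $j<i$. Then $\mathbb{P}[|X|>2\mu]\leq 2\exp(-\mu/(4B))$. -/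
/-!
Write `V i = 𝔼[|X i| ∣ X j, j < i]` and `c = (exp (|a| B) - 1) / B`. Since `exp` lies below its
chord on `[-|a| B, |a| B]`, `𝔼[exp (a X i) ∣ X j, j < i] ≤ 1 + c V i ≤ exp (c V i)`, so peeling off
the last factor repeatedly gives `𝔼[exp (∑ i, (a X i - c V i))] ≤ 1`. As `∑ i, V i ≤ M`, the
moment generating function of `X` is at most `exp (c M)`. For `a = ± log 2 / B` we get `c = 1 / B`,
and Chernoff's bound on each tail gives `exp ((1 - 2 log 2) M / B) ≤ exp (-M / (4 B))`.
-/

open MeasureTheory ProbabilityTheory Real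

lemma mul_le_abs_mul_of_abs_le {x B : ℝ} (a : ℝ) (hx : |x| ≤ B) : a * x ≤ |a| * B :=
  (le_abs_self _).trans (by rw [abs_mul]; gcongr)

lemma exp_mul_le_one_add_mul_abs {x B : ℝ} (hB : 0 < B) (a : ℝ) (hx : |x| ≤ B) :
    exp (a * x) ≤ 1 + (exp (|a| * B) - 1) / B * |x| := by
  have hθ : 0 ≤ |x| / B := by positivity
  have hchord := convexOn_exp.2 (Set.mem_univ 0) (Set.mem_univ (|a| * B))
    (sub_nonneg.2 ((div_le_one hB).2 hx)) hθ (sub_add_cancel 1 _)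
  simp only [smul_eq_mul, mul_zero, zero_add, exp_zero] at hchord
  calc exp (a * x) ≤ exp (|a| * |x|) := exp_le_exp.2 (mul_le_abs_mul_of_abs_le a le_rfl)
    _ = exp (|x| / B * (|a| * B)) := by field_simp
    _ ≤ (1 - |x| / B) * 1 + |x| / B * exp (|a| * B) := hchord
    _ = 1 + (exp (|a| * B) - 1) / B * |x| := by ring

lemma exp_abs_mul_sub_one_div_nonneg {B : ℝ} (hB : 0 ≤ B) (a : ℝ) :
    0 ≤ (exp (|a| * B) - 1) / B :=
  div_nonneg (sub_nonneg.2 (one_le_exp (by positivity))) hB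

lemma exp_neg_mul_one_add_le_one (y : ℝ) : exp (-y) * (1 + y) ≤ 1 := by
  calc exp (-y) * (1 + y) ≤ exp (-y) * exp y := by gcongr; linarith [add_one_le_exp y]
    _ = 1 := by rw [← exp_add, neg_add_cancel, exp_zero]

namespace MeasureTheory.Filtration

variable {Ω ι β : Type*} {mΩ : MeasurableSpace Ω} [Preorder ι] [MeasurableSpace β]

def strictNatural (X : ι → Ω → β) (hX : ∀ i, Measurable (X i)) : Filtration ι mΩ where
  seq i := ⨆ (j) (_ : j < i), MeasurableSpace.comap (X j) inferInstance
  mono' _ _ hii' := iSup₂_le fun j hj =>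
    le_iSup₂ (f := fun j (_ : j < _) => MeasurableSpace.comap (X j) inferInstance) j
      (hj.trans_le hii')
  le' _ := iSup₂_le fun j _ => (hX j).comap_le

lemma measurable_strictNatural {X : ι → Ω → β} (hX : ∀ i, Measurable (X i)) {i j : ι}
    (hij : i < j) : Measurable[strictNatural X hX j] (X i) :=
  Measurable.of_comap_le <|
    le_iSup₂ (f := fun j (_ : j < _) => MeasurableSpace.comap (X j) inferInstance) i hij

end MeasureTheory.Filtration

section Exponential

variable {Ω : Type*} {𝓖 mΩ : MeasurableSpace Ω} {μ : Measure Ω}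

section FiniteMeasure

variable [IsFiniteMeasure μ]

lemma integrable_exp_of_ae_le {f : Ω → ℝ} (hf : AEStronglyMeasurable f μ) {K : ℝ}
    (hK : ∀ᵐ ω ∂μ, f ω ≤ K) : Integrable (fun ω => exp (f ω)) μ :=
  .of_bound (continuous_exp.comp_aestronglyMeasurable hf) (exp K) <| by
    filter_upwards [hK] with ω hω
    rw [norm_of_nonneg (exp_pos _).le]
    exact exp_le_exp.2 hω

lemma integrable_exp_mul_of_abs_le {X : Ω → ℝ} (hX : Measurable X) {B : ℝ}
    (hbdd : ∀ ω, |X ω| ≤ B) (a : ℝ) : Integrable (fun ω => exp (a * X ω)) μ :=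
  integrable_exp_of_ae_le (hX.const_mul a).aestronglyMeasurable
    (.of_forall fun ω => mul_le_abs_mul_of_abs_le a (hbdd ω))

lemma integrable_exp_sum_of_ae_le {m : ℕ} {D : Fin m → Ω → ℝ} (hD : ∀ i, Measurable (D i))
    {K : ℝ} (hDK : ∀ i, ∀ᵐ ω ∂μ, D i ω ≤ K) :
    Integrable (fun ω => exp (∑ i, D i ω)) μ :=
  integrable_exp_of_ae_le (K := m * K)
    (Finset.measurable_sum _ fun i _ => hD i).aestronglyMeasurable <| by
      filter_upwards [ae_all_iff.2 hDK] with ω hω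
      simpa using Finset.sum_le_sum (s := Finset.univ) fun i _ => hω i

lemma integrable_exp_mul_sum {m : ℕ} {X : Fin m → Ω → ℝ} (hX : ∀ i, Measurable (X i)) {B : ℝ}
    (hbdd : ∀ i ω, |X i ω| ≤ B) (a : ℝ) :
    Integrable (fun ω => exp (a * ∑ i, X i ω)) μ := by
  simp_rw [Finset.mul_sum]
  exact integrable_exp_sum_of_ae_le (fun i => (hX i).const_mul a)
    fun i => .of_forall fun ω => mul_le_abs_mul_of_abs_le a (hbdd i ω)

lemma condExp_exp_mul_le (h𝓖 : 𝓖 ≤ mΩ) {X : Ω → ℝ} (hX : Measurable X) {B : ℝ} (hB : 0 < B)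
    (hbdd : ∀ ω, |X ω| ≤ B) (a : ℝ) :
    μ[fun ω => exp (a * X ω) | 𝓖] ≤ᵐ[μ]
      fun ω => 1 + (exp (|a| * B) - 1) / B * μ[fun ω => |X ω| | 𝓖] ω := by
  set c := (exp (|a| * B) - 1) / B
  have habs : Integrable (fun ω => |X ω|) μ :=
    .of_bound hX.abs.aestronglyMeasurable B (.of_forall fun ω => by simpa using hbdd ω)
  have hlin : μ[(fun _ => (1 : ℝ)) + c • fun ω => |X ω| | 𝓖] =ᵐ[μ]
      fun ω => 1 + c * μ[fun ω => |X ω| | 𝓖] ω := by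
    filter_upwards [condExp_add (integrable_const 1) (habs.smul c) 𝓖,
      condExp_smul (μ := μ) c (fun ω => |X ω|) 𝓖] with ω hadd hsmul
    rw [hadd, Pi.add_apply, hsmul, condExp_const h𝓖]
    rfl
  refine (condExp_mono (integrable_exp_mul_of_abs_le hX hbdd a)
    ((integrable_const 1).add (habs.smul c)) ?_).trans hlin.le
  exact .of_forall fun ω => exp_mul_le_one_add_mul_abs hB a (hbdd ω)

lemma condExp_exp_mul_sub_le_one (h𝓖 : 𝓖 ≤ mΩ) {X : Ω → ℝ} (hX : Measurable X) {B : ℝ}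
    (hB : 0 < B) (hbdd : ∀ ω, |X ω| ≤ B) (a : ℝ) :
    μ[fun ω => exp (a * X ω - (exp (|a| * B) - 1) / B * μ[fun ω => |X ω| | 𝓖] ω) | 𝓖]
      ≤ᵐ[μ] 1 := by
  set c := (exp (|a| * B) - 1) / B
  set V := μ[fun ω => |X ω| | 𝓖]
  have hc : 0 ≤ c := exp_abs_mul_sub_one_div_nonneg hB.le a
  have hV0 : 0 ≤ᵐ[μ] V := condExp_nonneg (.of_forall fun ω => abs_nonneg (X ω))
  have hprod : (fun ω => exp (a * X ω - c * V ω)) =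
      (fun ω => exp (-(c * V ω))) * fun ω => exp (a * X ω) := by
    ext ω
    rw [Pi.mul_apply, ← exp_add, neg_add_eq_sub]
  have hint : Integrable (fun ω => exp (a * X ω - c * V ω)) μ := by
    refine integrable_exp_of_ae_le (K := |a| * B) ((hX.const_mul a).sub
      ((stronglyMeasurable_condExp.mono h𝓖).measurable.const_mul c)).aestronglyMeasurable ?_
    filter_upwards [hV0] with ω hω
    linarith [mul_le_abs_mul_of_abs_le a (hbdd ω), mul_nonneg hc hω]
  have hV : StronglyMeasurable[𝓖] fun ω => exp (-(c * V ω)) :=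
    continuous_exp.comp_stronglyMeasurable (stronglyMeasurable_condExp.const_mul c).neg
  rw [hprod] at hint ⊢
  filter_upwards [condExp_mul_of_stronglyMeasurable_left hV hint
      (integrable_exp_mul_of_abs_le hX hbdd a),
    condExp_exp_mul_le h𝓖 hX hB hbdd a] with ω hpull hle
  rw [hpull, Pi.mul_apply]
  calc _ ≤ exp (-(c * V ω)) * (1 + c * V ω) := by gcongr
    _ ≤ 1 := exp_neg_mul_one_add_le_one _

lemma measureReal_two_mul_lt_le {S : Ω → ℝ} {B M : ℝ} (hB : 0 < B) (hM : 0 ≤ M)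
    (hint : Integrable (fun ω => exp (log 2 / B * S ω)) μ)
    (hmgf : ∫ ω, exp (log 2 / B * S ω) ∂μ ≤ exp (M / B)) :
    μ.real {ω | 2 * M < S ω} ≤ exp (-M / (4 * B)) := by
  have hexponent : (1 - 2 * log 2) * M ≤ -M / 4 := by nlinarith [log_two_gt_d9]
  calc μ.real {ω | 2 * M < S ω}
      ≤ μ.real {ω | 2 * M ≤ S ω} := measureReal_mono (Set.ofPred_subset_ofPred.2 fun _ => le_of_lt)
    _ ≤ exp (-(log 2 / B) * (2 * M)) * mgf S μ (log 2 / B) :=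
        measure_ge_le_exp_mul_mgf _ (by positivity) hint
    _ ≤ exp (-(log 2 / B) * (2 * M)) * exp (M / B) := by gcongr; exact hmgf
    _ = exp ((1 - 2 * log 2) * M / B) := by rw [← exp_add]; ring_nf
    _ ≤ exp (-M / (4 * B)) := by
        rw [exp_le_exp, ← div_div]
        exact div_le_div_of_nonneg_right hexponent hB.le

end FiniteMeasure

section ProbabilityMeasure

variable [IsProbabilityMeasure μ]

lemma integral_exp_sum_le_one {m : ℕ} (𝓕 : Fin m → MeasurableSpace Ω) (h𝓕 : ∀ i, 𝓕 i ≤ mΩ)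
    (D : Fin m → Ω → ℝ) (hD : ∀ i, Measurable (D i))
    (hD_past : ∀ i j, i < j → Measurable[𝓕 j] (D i)) {K : ℝ} (hDK : ∀ i, ∀ᵐ ω ∂μ, D i ω ≤ K)
    (hcond : ∀ i, μ[fun ω => exp (D i ω) | 𝓕 i] ≤ᵐ[μ] 1) :
    ∫ ω, exp (∑ i, D i ω) ∂μ ≤ 1 := by
  induction m with
  | zero => simp
  | succ m ih =>
    set P : Ω → ℝ := fun ω => exp (∑ i : Fin m, D i.castSucc ω)
    have hP : StronglyMeasurable[𝓕 (Fin.last m)] P :=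
      (continuous_exp.measurable.comp (Finset.measurable_sum _ fun i _ =>
        hD_past _ _ i.castSucc_lt_last)).stronglyMeasurable
    have hsplit : (fun ω => exp (∑ i, D i ω)) = P * fun ω => exp (D (Fin.last m) ω) := by
      ext ω
      simp only [Fin.sum_univ_castSucc, exp_add, P, Pi.mul_apply]
    have hstep : μ[fun ω => exp (∑ i, D i ω) | 𝓕 (Fin.last m)] ≤ᵐ[μ] P := by
      rw [hsplit]
      filter_upwards [condExp_mul_of_stronglyMeasurable_left hP
          (hsplit ▸ integrable_exp_sum_of_ae_le hD hDK)
          (integrable_exp_of_ae_le (hD _).aestronglyMeasurable (hDK _)),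
        hcond (Fin.last m)] with ω hpull hle
      rw [hpull, Pi.mul_apply]
      exact mul_le_of_le_one_right (exp_pos _).le hle
    calc ∫ ω, exp (∑ i, D i ω) ∂μ
        = ∫ ω, μ[fun ω => exp (∑ i, D i ω) | 𝓕 (Fin.last m)] ω ∂μ :=
          (integral_condExp (h𝓕 _)).symm
      _ ≤ ∫ ω, P ω ∂μ := integral_mono_ae integrable_condExp
          (integrable_exp_sum_of_ae_le (fun i => hD _) fun i => hDK _) hstep
      _ ≤ 1 := ih (fun i => 𝓕 i.castSucc) (fun i => h𝓕 _) (fun i => D i.castSucc)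
          (fun i => hD _) (fun i j hij => hD_past _ _ (Fin.castSucc_lt_castSucc_iff.2 hij))
          (fun i => hDK _) fun i => hcond _

lemma integral_exp_mul_sum_le {m : ℕ} (𝓕 : Filtration (Fin m) mΩ) {X : Fin m → Ω → ℝ}
    (hX : ∀ i, Measurable (X i)) (hX_past : ∀ i j, i < j → Measurable[𝓕 j] (X i))
    {B M : ℝ} (hB : 0 < B) (hbdd : ∀ i ω, |X i ω| ≤ B)
    (hcond : ∀ᵐ ω ∂μ, ∑ i, μ[fun ω' => |X i ω'| | 𝓕 i] ω ≤ M) (a : ℝ) :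
    ∫ ω, exp (a * ∑ i, X i ω) ∂μ ≤ exp ((exp (|a| * B) - 1) / B * M) := by
  set c := (exp (|a| * B) - 1) / B
  set V : Fin m → Ω → ℝ := fun i => μ[fun ω' => |X i ω'| | 𝓕 i]
  have hc : 0 ≤ c := exp_abs_mul_sub_one_div_nonneg hB.le a
  have hV : ∀ i j, i ≤ j → Measurable[𝓕 j] (V i) := fun i j hij =>
    (stronglyMeasurable_condExp.mono (𝓕.mono hij)).measurable
  have hV0 : ∀ i, 0 ≤ᵐ[μ] V i := fun i => condExp_nonneg (.of_forall fun ω => abs_nonneg _)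
  have hD : ∀ i, Measurable fun ω => a * X i ω - c * V i ω := fun i =>
    ((hX i).const_mul a).sub (((hV i i le_rfl).mono (𝓕.le i) le_rfl).const_mul c)
  have hD_le : ∀ i, ∀ᵐ ω ∂μ, a * X i ω - c * V i ω ≤ |a| * B := fun i => by
    filter_upwards [hV0 i] with ω hω
    nlinarith [mul_le_abs_mul_of_abs_le a (hbdd i ω), mul_nonneg hc hω]
  have hsum : ∀ᵐ ω ∂μ, a * ∑ i, X i ω ≤ ∑ i, (a * X i ω - c * V i ω) + c * M := by
    filter_upwards [hcond] with ω hω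
    rw [Finset.sum_sub_distrib, ← Finset.mul_sum, ← Finset.mul_sum]
    nlinarith
  have hsupermartingale := integral_exp_sum_le_one 𝓕 𝓕.le _ hD
    (fun i j hij => ((hX_past i j hij).const_mul a).sub ((hV i j hij.le).const_mul c)) hD_le
    fun i => condExp_exp_mul_sub_le_one (𝓕.le i) (hX i) hB (hbdd i) a
  calc ∫ ω, exp (a * ∑ i, X i ω) ∂μ
      ≤ ∫ ω, exp (∑ i, (a * X i ω - c * V i ω)) * exp (c * M) ∂μ := by
        refine integral_mono_ae (integrable_exp_mul_sum hX hbdd a)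
          ((integrable_exp_sum_of_ae_le hD hD_le).mul_const _) ?_
        filter_upwards [hsum] with ω hω
        rw [← exp_add]
        exact exp_le_exp.2 hω
    _ = (∫ ω, exp (∑ i, (a * X i ω - c * V i ω)) ∂μ) * exp (c * M) := integral_mul_const _ _
    _ ≤ exp (c * M) := mul_le_of_le_one_left (exp_pos _).le hsupermartingale

lemma measureReal_two_mul_lt_abs_sum_le {m : ℕ} (𝓕 : Filtration (Fin m) mΩ)
    {X : Fin m → Ω → ℝ} (hX : ∀ i, Measurable (X i))
    (hX_past : ∀ i j, i < j → Measurable[𝓕 j] (X i)) {B M : ℝ} (hB : 0 < B)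
    (hbdd : ∀ i ω, |X i ω| ≤ B) (hcond : ∀ᵐ ω ∂μ, ∑ i, μ[fun ω' => |X i ω'| | 𝓕 i] ω ≤ M) :
    μ.real {ω | 2 * M < |∑ i, X i ω|} ≤ 2 * exp (-M / (4 * B)) := by
  have hM : 0 ≤ M := by
    obtain ⟨ω, hω, hV0⟩ := (hcond.and (ae_all_iff.2 fun i => condExp_nonneg (m := 𝓕 i)
      (f := fun ω => |X i ω|) (.of_forall fun ω => abs_nonneg _))).exists
    exact (Finset.sum_nonneg fun i _ => hV0 i).trans hω
  have hrate : ∀ a, |a| = log 2 / B → (exp (|a| * B) - 1) / B * M = M / B := fun a ha => by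
    rw [ha, div_mul_cancel₀ _ hB.ne', exp_log two_pos]
    ring
  have hupper := integral_exp_mul_sum_le 𝓕 hX hX_past hB hbdd hcond (log 2 / B)
  have hlower := integral_exp_mul_sum_le 𝓕 hX hX_past hB hbdd hcond (-(log 2 / B))
  rw [hrate _ (abs_of_pos (by positivity))] at hupper
  rw [hrate _ ((abs_neg _).trans (abs_of_pos (by positivity)))] at hlower
  simp_rw [neg_mul, ← mul_neg] at hlower
  have hint := integrable_exp_mul_sum (μ := μ) hX hbdd
  calc μ.real {ω | 2 * M < |∑ i, X i ω|}
      ≤ μ.real ({ω | 2 * M < ∑ i, X i ω} ∪ {ω | 2 * M < -∑ i, X i ω}) :=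
        measureReal_mono fun _ h => lt_abs.1 (Set.mem_ofPred.1 h)
    _ ≤ μ.real {ω | 2 * M < ∑ i, X i ω} + μ.real {ω | 2 * M < -∑ i, X i ω} :=
        measureReal_union_le _ _
    _ ≤ exp (-M / (4 * B)) + exp (-M / (4 * B)) := by
        gcongr
        · exact measureReal_two_mul_lt_le hB hM (hint _) hupper
        · refine measureReal_two_mul_lt_le hB hM ?_ hlower
          simpa only [neg_mul, ← mul_neg] using hint (-(log 2 / B))
    _ = 2 * exp (-M / (4 * B)) := (two_mul _).symm

end ProbabilityMeasure

end Exponential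

/-- A convenient form of Freedman's inequality: if `X = ∑ i, X i` with `|X i| ≤ B`, and the sum
of the conditional expectations `𝔼_i[|X i|]` (conditional on the earlier variables
`X j`, `j < i`) is at most `M` almost surely, then `ℙ[|X| > 2M] ≤ 2 exp(-M/(4B))`. -/
theorem freedman_convenient {Ω : Type*} [MeasurableSpace Ω] (μ : Measure Ω)
    [IsProbabilityMeasure μ] {m : ℕ} (X : Fin m → Ω → ℝ)
    (hX : ∀ i, Measurable (X i))
    (B M : ℝ) (hB : 0 < B)
    (hbdd : ∀ i ω, |X i ω| ≤ B)
    (hcond : ∀ᵐ ω ∂μ,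
      (∑ i : Fin m,
        (μ[(fun ω' => |X i ω'|) |
          ⨆ (j : Fin m) (_ : j < i), MeasurableSpace.comap (X j) inferInstance]) ω) ≤ M) :
    (μ {ω | 2 * M < |∑ i : Fin m, X i ω|}).toReal ≤ 2 * Real.exp (-M / (4 * B)) :=
  measureReal_two_mul_lt_abs_sum_le (Filtration.strictNatural X hX) hX
    (fun _ _ => Filtration.measurable_strictNatural hX) hB hbdd hcond
end

section
/- Let $G$ be a bipartite graph with vertex partition $(A,B)$, $|A|=|B|=n$, and let $X\subseteq A$, $Y\subseteq B$. If for $m\leq n$ we have $m|X|+m|Y|+e_G(A\setminus X,B\setminus Y)\geq mn$ for all $X\subseteq A$ and $Y\subseteq B$, then $G$ has an $m$-factor; conversely, if $G$ has an $m$-factor then the inequality holds for all such $X,Y$. -/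
open Finset
open scoped Classical

variable {V : Type*} [Fintype V] [DecidableEq V]

/-!
Split every `a ∈ A` and every `b ∈ B` into `m` copies and add one vertex for every pair `(a, b)`.
Match each copy of `a` to a pair `(a, b)` with `b ∈ B` adjacent to `a`, and each pair either to
itself or to a copy of its second entry. For the copies of `P ⊆ A` together with pairs whose
second entries form `Q ⊆ B`, Hall's condition reads `m|P| ≤ m|Q| + e(P, B \ Q)`: this is the
hypothesis for `X = A \ P`, `Y = Q`. The pairs taken by copies of vertices of `A` then have degree
`m` at `A`; none of them is matched to itself, so they have degree at most `m` at `B`, and double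
counting with `|A| = |B|` gives equality. The converse is the same double count.
-/

section Subrelation

variable {α β : Type*} {r R : α → β → Prop} {A : Finset α} {B : Finset β} {m : ℕ}

lemma sum_card_filter_eq_card_filter_product (r : α → β → Prop) (P : Finset α)
    (T : Finset β) :
    ∑ a ∈ P, #{b ∈ T | r a b} = #{p ∈ P ×ˢ T | r p.1 p.2} := by
  simp only [card_filter, sum_product]

lemma card_filter_eq_of_card_eq (hAB : #A = #B) (hRA : ∀ a ∈ A, #{b ∈ B | R a b} = m)
    (hRB : ∀ b ∈ B, #{a ∈ A | R a b} ≤ m) : ∀ b ∈ B, #{a ∈ A | R a b} = m := by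
  refine (sum_eq_sum_iff_of_le hRB).1 ?_
  calc ∑ b ∈ B, #{a ∈ A | R a b} = ∑ a ∈ A, #{b ∈ B | R a b} :=
        (sum_card_bipartiteAbove_eq_sum_card_bipartiteBelow R).symm
    _ = ∑ _b ∈ B, m := by rw [sum_congr rfl hRA, sum_const, sum_const, hAB]

variable [DecidableEq α] [DecidableEq β]

lemma mul_card_le_of_subrel (hRr : ∀ a b, R a b → r a b)
    (hRA : ∀ a ∈ A, #{b ∈ B | R a b} = m) (hRB : ∀ b ∈ B, #{a ∈ A | R a b} ≤ m)
    {X : Finset α} {Y : Finset β} (hX : X ⊆ A) (hY : Y ⊆ B) :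
    m * #A ≤ m * #X + m * #Y + ∑ a ∈ A \ X, #{b ∈ B \ Y | r a b} := by
  have hsplit (a : α) : #{b ∈ B | R a b} = #{b ∈ Y | R a b} + #{b ∈ B \ Y | R a b} := by
    rw [← card_union_of_disjoint (disjoint_filter_filter disjoint_sdiff), ← filter_union,
      union_sdiff_of_subset hY]
  have hinY : ∑ a ∈ A \ X, #{b ∈ Y | R a b} ≤ m * #Y :=
    calc ∑ a ∈ A \ X, #{b ∈ Y | R a b}
        ≤ ∑ a ∈ A, #{b ∈ Y | R a b} := sum_le_sum_of_subset sdiff_subset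
      _ = ∑ b ∈ Y, #{a ∈ A | R a b} := sum_card_bipartiteAbove_eq_sum_card_bipartiteBelow R
      _ ≤ ∑ _b ∈ Y, m := sum_le_sum fun b hb => hRB b (hY hb)
      _ = m * #Y := by rw [sum_const, smul_eq_mul, mul_comm]
  have hRr_sum : ∑ a ∈ A \ X, #{b ∈ B \ Y | R a b} ≤ ∑ a ∈ A \ X, #{b ∈ B \ Y | r a b} :=
    sum_le_sum fun a _ => card_le_card (monotone_filter_right _ fun b _ => hRr a b)
  calc m * #A = ∑ a ∈ A, #{b ∈ B | R a b} := by
        rw [sum_congr rfl hRA, sum_const, smul_eq_mul, mul_comm]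
    _ = ∑ a ∈ X, #{b ∈ B | R a b} + ∑ a ∈ A \ X, #{b ∈ B | R a b} := by
        rw [← sum_sdiff hX, add_comm]
    _ = m * #X + (∑ a ∈ A \ X, #{b ∈ Y | R a b} + ∑ a ∈ A \ X, #{b ∈ B \ Y | R a b}) := by
        rw [sum_congr rfl fun a ha => hRA a (hX ha), sum_const, smul_eq_mul, mul_comm,
          ← sum_add_distrib, sum_congr rfl fun a _ => hsplit a]
    _ ≤ _ := by omega

noncomputable def hallGadget (r : α → β → Prop) (A : Finset α) (B : Finset β) (m : ℕ) :
    (A × Fin m) ⊕ (α × β) → Finset ((β × Fin m) ⊕ (α × β))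
  | .inl x => {b ∈ B | r x.1 b}.image fun b => .inr (x.1, b)
  | .inr p => insert (.inr p) (univ.image fun j => .inl (p.2, j))

lemma mem_hallGadget_inl {x : A × Fin m} {y : (β × Fin m) ⊕ (α × β)} :
    y ∈ hallGadget r A B m (.inl x) ↔ ∃ b ∈ B, r x.1 b ∧ y = .inr (x.1, b) := by
  simp [hallGadget, and_assoc, eq_comm]

lemma mem_hallGadget_inr {p : α × β} {y : (β × Fin m) ⊕ (α × β)} :
    y ∈ hallGadget r A B m (.inr p) ↔ y = .inr p ∨ ∃ j, y = .inl (p.2, j) := by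
  simp [hallGadget, eq_comm]

lemma card_le_card_biUnion_hallGadget
    (hall : ∀ P ⊆ A, ∀ Q ⊆ B, m * #P ≤ m * #Q + ∑ a ∈ P, #{b ∈ B \ Q | r a b})
    (S : Finset ((A × Fin m) ⊕ (α × β))) : #S ≤ #(S.biUnion (hallGadget r A B m)) := by
  set N := S.biUnion (hallGadget r A B m)
  set P : Finset α := S.toLeft.image fun x => (x.1 : α)
  set Q : Finset β := {b ∈ B | ∃ p ∈ S.toRight, p.2 = b}
  set D : Finset (α × β) := {p ∈ P ×ˢ (B \ Q) | r p.1 p.2}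
  have hP : P ⊆ A := by
    intro a ha
    obtain ⟨x, -, rfl⟩ := mem_image.1 ha
    exact x.1.2
  have hS₁ : #S.toLeft ≤ m * #P := by
    refine card_le_mul_card_image _ m fun a _ => ?_
    calc #{x ∈ S.toLeft | (x.1 : α) = a} ≤ #(univ : Finset (Fin m)) :=
          card_le_card_of_injOn Prod.snd (fun _ _ => mem_coe.2 (mem_univ _))
            fun x hx y hy hxy => Prod.ext (Subtype.ext (((mem_filter.1 hx).2).trans
              ((mem_filter.1 hy).2).symm)) hxy
      _ = m := by simp
  have hQN : Q ×ˢ (univ : Finset (Fin m)) ⊆ N.toLeft := by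
    rintro ⟨b, j⟩ hb
    obtain ⟨-, p, hp, rfl⟩ := mem_filter.1 (mem_product.1 hb).1
    exact mem_toLeft.2 (mem_biUnion.2
      ⟨.inr p, mem_toRight.1 hp, mem_hallGadget_inr.2 (.inr ⟨j, rfl⟩)⟩)
  have hSN : S.toRight ⊆ N.toRight := fun p hp =>
    mem_toRight.2 (mem_biUnion.2 ⟨.inr p, mem_toRight.1 hp, mem_hallGadget_inr.2 (.inl rfl)⟩)
  have hDN : D ⊆ N.toRight := by
    rintro ⟨a, b⟩ hp
    obtain ⟨hab, hr⟩ := mem_filter.1 hp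
    obtain ⟨ha, hb⟩ := mem_product.1 hab
    obtain ⟨x, hx, rfl⟩ := mem_image.1 ha
    exact mem_toRight.2 (mem_biUnion.2
      ⟨.inl x, mem_toLeft.1 hx, mem_hallGadget_inl.2 ⟨b, (mem_sdiff.1 hb).1, hr, rfl⟩⟩)
  have hSD : Disjoint S.toRight D := by
    refine disjoint_left.2 fun p hp hpD => ?_
    obtain ⟨hB, hQ⟩ := mem_sdiff.1 (mem_product.1 (mem_filter.1 hpD).1).2
    exact hQ (mem_filter.2 ⟨hB, p, hp, rfl⟩)
  calc #S = #S.toLeft + #S.toRight := card_toLeft_add_card_toRight.symm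
    _ ≤ m * #Q + #D + #S.toRight := by
        rw [← sum_card_filter_eq_card_filter_product]
        gcongr
        exact hS₁.trans (hall P hP Q (filter_subset _ _))
    _ = #(Q ×ˢ (univ : Finset (Fin m))) + #(S.toRight ∪ D) := by
        rw [card_product, card_univ, Fintype.card_fin, card_union_of_disjoint hSD]
        ring
    _ ≤ #N.toLeft + #N.toRight :=
        add_le_add (card_le_card hQN) (card_le_card (union_subset hSN hDN))
    _ = #N := card_toLeft_add_card_toRight

lemma exists_subrel_of_hall
    (hall : ∀ P ⊆ A, ∀ Q ⊆ B, m * #P ≤ m * #Q + ∑ a ∈ P, #{b ∈ B \ Q | r a b}) :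
    ∃ R : α → β → Prop, (∀ a b, R a b → r a b) ∧
      (∀ a ∈ A, #{b ∈ B | R a b} = m) ∧ ∀ b ∈ B, #{a ∈ A | R a b} ≤ m := by
  obtain ⟨f, hf_inj, hf⟩ :=
    (all_card_le_biUnion_card_iff_exists_injective (hallGadget r A B m)).1
      (card_le_card_biUnion_hallGadget hall)
  choose φ hφB hφr hφ using fun x => mem_hallGadget_inl.1 (hf (.inl x))
  have hφ_inj (a : A) : Function.Injective fun i => φ (a, i) := fun i j hij => by
    simpa using hf_inj ((hφ (a, i)).trans
      ((congrArg (fun b => Sum.inr ((a : α), b)) hij).trans (hφ (a, j)).symm))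
  obtain ⟨R, hR⟩ : ∃ R : α → β → Prop,
      ∀ a b, R a b ↔ ∃ x : A × Fin m, (x.1 : α) = a ∧ φ x = b := ⟨_, fun _ _ => Iff.rfl⟩
  have hdegA : ∀ a ∈ A, #{b ∈ B | R a b} = m := by
    intro a ha
    have : {b ∈ B | R a b} = univ.image fun i => φ (⟨a, ha⟩, i) := by
      ext b
      simp only [mem_filter, mem_image, mem_univ, true_and, hR]
      constructor
      · rintro ⟨-, ⟨a', i⟩, rfl, rfl⟩
        exact ⟨i, rfl⟩
      · rintro ⟨i, rfl⟩
        exact ⟨hφB _, _, rfl, rfl⟩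
    rw [this, card_image_of_injective _ (hφ_inj _), card_univ, Fintype.card_fin]
  have hdegB : ∀ b ∈ B, #{a ∈ A | R a b} ≤ m := by
    intro b _
    -- a picked pair `(a, b)` is not matched to itself, so it takes one of the `m` copies of `b`
    have hcopy : ∀ a ∈ {a ∈ A | R a b},
        f (.inr (a, b)) ∈ (univ : Finset (Fin m)).image fun j => .inl (b, j) := by
      intro a ha
      obtain ⟨x, rfl, rfl⟩ := (hR a b).1 (mem_filter.1 ha).2
      rcases mem_hallGadget_inr.1 (hf (.inr (x.1, φ x))) with hself | ⟨j, hj⟩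
      · exact absurd (hf_inj (hself.trans (hφ x).symm)) Sum.inr_ne_inl
      · exact mem_image.2 ⟨j, mem_univ _, hj.symm⟩
    calc #{a ∈ A | R a b}
        ≤ #((univ : Finset (Fin m)).image fun j => .inl (b, j)) :=
          card_le_card_of_injOn _ (fun a ha => hcopy a ha)
            fun a _ a' _ h => congrArg Prod.fst (Sum.inr_injective (hf_inj h))
      _ ≤ m := card_image_le.trans (by simp)
  refine ⟨R, fun a b hab => ?_, hdegA, hdegB⟩
  obtain ⟨x, rfl, rfl⟩ := (hR a b).1 hab
  exact hφr x

theorem exists_subrel_iff :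
    (∃ R : α → β → Prop, (∀ a b, R a b → r a b) ∧
      (∀ a ∈ A, #{b ∈ B | R a b} = m) ∧ ∀ b ∈ B, #{a ∈ A | R a b} ≤ m) ↔
    ∀ X ⊆ A, ∀ Y ⊆ B, m * #A ≤ m * #X + m * #Y + ∑ a ∈ A \ X, #{b ∈ B \ Y | r a b} := by
  refine ⟨fun ⟨R, hRr, hRA, hRB⟩ X hX Y hY => mul_card_le_of_subrel hRr hRA hRB hX hY,
    fun h => exists_subrel_of_hall fun P hP Q hQ => ?_⟩
  have hPQ := h (A \ P) sdiff_subset Q hQ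
  rw [Finset.sdiff_sdiff_eq_self hP, ← card_sdiff_add_card_eq_card hP, mul_add] at hPQ
  omega

end Subrelation

section BipartiteFromRel

variable {α : Type*} {A B : Finset α} {R : α → α → Prop}

def bipartiteFromRel (A B : Finset α) (R : α → α → Prop) : SimpleGraph α :=
  SimpleGraph.fromRel fun u v => u ∈ A ∧ v ∈ B ∧ R u v

lemma bipartiteFromRel_le {G : SimpleGraph α} (hR : ∀ a b, R a b → G.Adj a b) :
    bipartiteFromRel A B R ≤ G := by
  rintro u v ⟨-, ⟨-, -, h⟩ | ⟨-, -, h⟩⟩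
  exacts [hR _ _ h, (hR _ _ h).symm]

lemma bipartiteFromRel_adj (hAB : Disjoint A B) {a b : α} (ha : a ∈ A) (hb : b ∈ B) :
    (bipartiteFromRel A B R).Adj a b ↔ R a b := by
  have hab : a ≠ b := fun h => disjoint_left.1 hAB ha (h ▸ hb)
  simp [bipartiteFromRel, hab, ha, hb, disjoint_left.1 hAB ha, disjoint_right.1 hAB hb]

end BipartiteFromRel

lemma nbhd_inter_eq_filter (K : SimpleGraph V) (u : V) (T : Finset V) :
    nbhd K u ∩ T = {v ∈ T | K.Adj u v} := by
  ext v
  simp [nbhd, and_comm]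

theorem m_factor_characterization_general (G : SimpleGraph V) (A B : Finset V) (n m : ℕ)
    (hA : A.card = n) (hB : B.card = n) (hdisj : Disjoint A B) :
    (∃ K : SimpleGraph V, K ≤ G ∧
        (∀ a ∈ A, (nbhd K a ∩ B).card = m) ∧ (∀ b ∈ B, (nbhd K b ∩ A).card = m)) ↔
      (∀ X ⊆ A, ∀ Y ⊆ B, m * n ≤ m * X.card + m * Y.card + eBetween G (A \ X) (B \ Y)) := by
  subst hA
  simp only [nbhd_inter_eq_filter]
  constructor
  · rintro ⟨K, hKG, hKA, hKB⟩
    refine exists_subrel_iff.1 ⟨K.Adj, hKG, hKA, fun b hb => ?_⟩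
    simp only [SimpleGraph.adj_comm K _ b, hKB b hb, le_refl]
  intro h
  obtain ⟨R, hRG, hRA, hRB⟩ := exists_subrel_iff.2 h
  have hRB_eq := card_filter_eq_of_card_eq hB.symm hRA hRB
  refine ⟨bipartiteFromRel A B R, bipartiteFromRel_le hRG, fun a ha => ?_, fun b hb => ?_⟩
  · rw [← hRA a ha]
    exact congrArg card (filter_congr fun b hb => bipartiteFromRel_adj hdisj ha hb)
  · rw [← hRB_eq b hb]
    exact congrArg card (filter_congr fun a ha => (SimpleGraph.adj_comm _ _ _).trans
      (bipartiteFromRel_adj hdisj ha hb))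

/-- The Gale–Ryser/Ore type characterization of `m`-factors in balanced bipartite graphs used in
the paper: a bipartite graph `G` with parts `A, B` of size `n` has a spanning `m`-regular
subgraph if and only if `m|X| + m|Y| + e_G(A \ X, B \ Y) ≥ mn` for all `X ⊆ A` and `Y ⊆ B`. -/
theorem m_factor_characterization (G : SimpleGraph V) (A B : Finset V) (n m : ℕ)
    (hA : A.card = n) (hB : B.card = n) (hdisj : Disjoint A B)
    (hbip : ∀ u v, G.Adj u v → (u ∈ A ∧ v ∈ B) ∨ (u ∈ B ∧ v ∈ A))
    (hm : m ≤ n) :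
    (∃ K : SimpleGraph V, K ≤ G ∧
        (∀ a ∈ A, (nbhd K a ∩ B).card = m) ∧ (∀ b ∈ B, (nbhd K b ∩ A).card = m)) ↔
      (∀ X ⊆ A, ∀ Y ⊆ B, m * n ≤ m * X.card + m * Y.card + eBetween G (A \ X) (B \ Y)) :=
  m_factor_characterization_general G A B n m hA hB hdisj
end
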